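/- The map π_k : A₂(k) → R[k] from the span of admissible Steenrod monomials of length ≤ k to the length-k component of the Dyer-Lashof algebra, defined by π_k(Q^I) = Q^I (Q^0)^{k−ℓ(I)} (rewritten into admissible form via homology Adem relations), is a surjection of 𝔽₂-vector spaces (indeed of coalgebras): for every admissible nonnegative-excess I = Σ_{t=0}^{k−1} a_t I_{k,t} of length k with Σ a_t > 0, there exists K ∈ A₂(k) with π_k(K) = Q^I. -/

import Mathlib

noncomputable section

abbrev F : Type := FreeAlgebra (ZMod 2) ℕ

def Q (i : ℕ) : F := FreeAlgebra.ι (ZMod 2) i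

/-- The monomial `Q^I` for `I = [i_k,...,i_1]` (written left to right). -/
def QI (I : List ℕ) : F := (I.map Q).prod

/-- Binomial coefficient mod 2 with possibly negative arguments (zero out of range). -/
def ch (m n : ℤ) : ZMod 2 :=
  if 0 ≤ m ∧ 0 ≤ n then ((m.toNat).choose n.toNat : ZMod 2) else 0

/-- The relations presenting the mod 2 Dyer-Lashof algebra: the homology Adem relations
`Q^r Q^s = Σ_{t>0} C(t−s−1, 2t−r) Q^{r+s−t} Q^t` for `r > 2s`, and the vanishing of
monomials of negative excess. -/
inductive dlRel : F → F → Prop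
  | adem (r s : ℕ) (h : 2 * s < r) :
      dlRel (Q r * Q s)
        (∑ t ∈ Finset.Icc 1 (r + s),
          ch ((t : ℤ) - s - 1) (2 * t - r) • (Q (r + s - t) * Q t))
  | excess (L : List ℕ) (h : ((L.headD 0 : ℤ)) < ((L.tail.sum : ℕ) : ℤ)) :
      dlRel (QI L) 0

/-- The mod 2 Dyer-Lashof algebra `ℛ`. -/
abbrev R : Type := RingQuot dlRel

def mkR : F →ₐ[ZMod 2] R := RingQuot.mkAlgHom (ZMod 2) dlRel

/-- Madsen's sequences `I_{k,t}` (index `i` = `(i+1)`-st entry from the right). -/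
def Ikt (k t : ℕ) : ℕ → ℕ := fun i =>
  if i < k then (if k ≤ i + t then 2 ^ i - 2 ^ (i + t - k) else 2 ^ i) else 0

/-- The monomial `Q^I` for a sequence given as a function `ℕ → ℕ` supported on
`{0,...,k−1}` (leftmost factor is the top entry, index `k−1`). -/
def QF (k : ℕ) (f : ℕ → ℕ) : F := (((List.range k).reverse).map fun i => Q (f i)).prod

/-- Steenrod admissibility for a monomial written as a list `[s_m,...,s_1]` :
`s_{t+1} ≥ 2 s_t` for all `t`. -/
def StAdmissible (L : List ℕ) : Prop := List.Chain' (fun x y => 2 * y ≤ x) L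

/-! Inducting on the length of a word `w`, one shows that `Q^w` lies in the span of the images
`π_n(Q^L) = Q^L (Q^0)^{n-ℓ(L)}` of Steenrod-admissible words `L` with positive entries and the same
degree; it suffices to multiply such an image on the left by a single `Q^x`, with `l` the head
of `L`. If `x < Σ L` the product has negative excess and vanishes, and if `2l ≤ x` the word
`x :: L` is already admissible. Otherwise `l ≤ x < 2l`, and the Adem relation for `Q^{2l} Q^{x-l}`
rewrites `Q^x Q^l` as `Q^{2l} Q^{x-l}` plus terms `Q^{x+l-t} Q^t` with `t > l`; every word this
produces has a smaller value of `x + Σ L - l`, which drives a well-founded induction. -/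

theorem exists_finset_sum_eq_of_mem_span_image {M ι : Type*} [AddCommMonoid M]
    [Module (ZMod 2) M] {v : ι → M} {s : Set ι} {y : M}
    (hy : y ∈ Submodule.span (ZMod 2) (v '' s)) :
    ∃ c : Finset ι, (∀ i ∈ c, i ∈ s) ∧ ∑ i ∈ c, v i = y := by
  obtain ⟨l, hl, rfl⟩ := Finsupp.mem_span_image_iff_linearCombination (ZMod 2) |>.mp hy
  refine ⟨l.support, fun i hi => (Finsupp.mem_supported _ l).mp hl hi, ?_⟩
  rw [Finsupp.linearCombination_apply, Finsupp.sum]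
  refine Finset.sum_congr rfl fun i hi => ?_
  have h1 : l i = 1 := by
    have := Finsupp.mem_support_iff.mp hi
    generalize l i = z at this ⊢
    fin_cases z
    · exact absurd rfl this
    · rfl
  rw [h1, one_smul]

lemma QI_cons (x : ℕ) (L : List ℕ) : QI (x :: L) = Q x * QI L := by simp [QI]

lemma QI_append (L₁ L₂ : List ℕ) : QI (L₁ ++ L₂) = QI L₁ * QI L₂ := by simp [QI]

lemma QI_replicate_zero (j : ℕ) : QI (List.replicate j 0) = Q 0 ^ j := by simp [QI]

lemma mkR_eq_of_dlRel {a b : F} (h : dlRel a b) : mkR a = mkR b :=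
  RingQuot.mkAlgHom_rel (ZMod 2) h

lemma mkR_Q_mul_Q_eq_of_lt_two_mul {x l : ℕ} (hlx : l ≤ x) (hx : x < 2 * l) :
    ∃ c : ℕ → ZMod 2, mkR (Q x * Q l) = mkR (Q (2 * l) * Q (x - l)) +
      ∑ t ∈ Finset.Ioc l (x + l), c t • mkR (Q (x + l - t) * Q t) := by
  set c : ℕ → ZMod 2 := fun t => ch ((t : ℤ) - (x - l : ℕ) - 1) (2 * t - 2 * l)
  -- the `t = l` term of this Adem relation is `Q^x Q^l`, and the terms with `t < l` vanish
  have hadem : mkR (Q (2 * l) * Q (x - l)) =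
      ∑ t ∈ Finset.Icc 1 (x + l), c t • mkR (Q (x + l - t) * Q t) := by
    rw [mkR_eq_of_dlRel (dlRel.adem (2 * l) (x - l) (by omega)), map_sum,
      show 2 * l + (x - l) = x + l by omega]
    simp [c]
  have hlow : ∀ t ∈ Finset.Icc 1 (x + l), t ∉ Finset.Icc l (x + l) → c t = 0 := by
    intro t ht₁ ht
    simp only [Finset.mem_Icc] at ht₁ ht
    simp only [c, ch]
    rw [if_neg]
    omega
  have hl : c l = 1 := by
    simp only [c, ch]
    rw [if_pos (by omega)]
    simp
  refine ⟨fun t => -c t, ?_⟩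
  rw [hadem, ← Finset.sum_subset (Finset.Icc_subset_Icc_left (by omega : 1 ≤ l))
    (fun t ht ht' => by rw [hlow t ht ht', zero_smul]), Finset.Icc_eq_cons_Ioc (by omega),
    Finset.sum_cons, hl, one_smul, show x + l - l = x by omega, add_assoc,
    ← Finset.sum_add_distrib]
  rw [Finset.sum_eq_zero fun t _ => by simp only [← add_smul, add_neg_cancel, zero_smul], add_zero]

lemma stAdmissible_cons {x : ℕ} {L : List ℕ} :
    StAdmissible (x :: L) ↔ 2 * L.headD 0 ≤ x ∧ StAdmissible L := by
  show List.IsChain _ _ ↔ _ ∧ List.IsChain _ _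
  cases L <;> simp

structure IsAdmissibleWord (n : ℕ) (L : List ℕ) : Prop where
  length_le : L.length ≤ n
  stAdmissible : StAdmissible L
  one_le : ∀ x ∈ L, 1 ≤ x

namespace IsAdmissibleWord

variable {n x l : ℕ} {L : List ℕ}

lemma nil : IsAdmissibleWord n [] := ⟨by simp, List.isChain_nil, by simp⟩

lemma cons (hL : IsAdmissibleWord n L) (hx : 1 ≤ x) (hxL : 2 * L.headD 0 ≤ x) :
    IsAdmissibleWord (n + 1) (x :: L) where
  length_le := by simpa using hL.length_le
  stAdmissible := stAdmissible_cons.mpr ⟨hxL, hL.stAdmissible⟩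
  one_le y hy := by
    rcases List.mem_cons.mp hy with rfl | hy
    exacts [hx, hL.one_le y hy]

lemma of_cons (h : IsAdmissibleWord (n + 1) (l :: L)) : IsAdmissibleWord n L where
  length_le := by simpa using h.length_le
  stAdmissible := (stAdmissible_cons.mp h.stAdmissible).2
  one_le y hy := h.one_le y (List.mem_cons_of_mem l hy)

lemma one_le_head (h : IsAdmissibleWord n (l :: L)) : 1 ≤ l := h.one_le l List.mem_cons_self

end IsAdmissibleWord

def pi (n : ℕ) (L : List ℕ) : R := mkR (QI L * Q 0 ^ (n - L.length))

def piSpan (n D : ℕ) : Submodule (ZMod 2) R :=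
  Submodule.span (ZMod 2) (pi n '' {L | IsAdmissibleWord n L ∧ L.sum = D})

lemma pi_mem_piSpan {n : ℕ} {L : List ℕ} (hL : IsAdmissibleWord n L) :
    pi n L ∈ piSpan n L.sum :=
  Submodule.subset_span ⟨L, ⟨hL, rfl⟩, rfl⟩

lemma pi_cons_mem_piSpan_of_isAdmissibleWord {n x : ℕ} {L : List ℕ}
    (h : IsAdmissibleWord n (x :: L)) : pi n (x :: L) ∈ piSpan n (x + L.sum) := by
  simpa only [List.sum_cons] using pi_mem_piSpan h

lemma mkR_Q_mul_pi (x n : ℕ) (L : List ℕ) :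
    mkR (Q x) * pi n L = pi (n + 1) (x :: L) := by
  simp [pi, QI_cons, mul_assoc]

lemma pi_cons_eq_zero_of_lt_sum {n x : ℕ} {L : List ℕ} (h : x < L.sum) : pi n (x :: L) = 0 := by
  have hword : QI (x :: L) * Q 0 ^ (n - (x :: L).length) =
      QI (x :: (L ++ List.replicate (n - (x :: L).length) 0)) := by
    simp [QI_cons, QI_append, QI_replicate_zero, mul_assoc]
  rw [pi, hword, mkR_eq_of_dlRel (dlRel.excess _ ?_), map_zero]
  simp only [List.headD_cons, List.tail_cons, List.sum_append, List.sum_replicate, smul_zero,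
    add_zero]
  exact_mod_cast h

lemma pi_succ_singleton_zero (n : ℕ) : pi (n + 1) [0] = pi (n + 1) [] := by
  simp [pi, QI, pow_succ']

lemma mkR_Q_mul_mem_piSpan {x n D : ℕ}
    (h : ∀ L, IsAdmissibleWord n L → L.sum = D → pi (n + 1) (x :: L) ∈ piSpan (n + 1) (x + D))
    {y : R} (hy : y ∈ piSpan n D) : mkR (Q x) * y ∈ piSpan (n + 1) (x + D) := by
  have hle : piSpan n D ≤
      (piSpan (n + 1) (x + D)).comap (LinearMap.mulLeft (ZMod 2) (mkR (Q x))) := by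
    refine Submodule.span_le.mpr ?_
    rintro _ ⟨L, ⟨hL, hsum⟩, rfl⟩
    simpa [mkR_Q_mul_pi] using h L hL hsum
  exact hle hy

lemma pi_cons_cons (x l n : ℕ) (L : List ℕ) :
    pi (n + 2) (x :: l :: L) = mkR (Q x * Q l) * pi n L := by
  rw [map_mul, mul_assoc, mkR_Q_mul_pi, mkR_Q_mul_pi]

lemma pi_cons_cons_mem_piSpan_of_adem {x l n : ℕ} {rest : List ℕ}
    (hrest : IsAdmissibleWord (n + 1) (l :: rest)) (hlx : l ≤ x) (hx : x < 2 * l)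
    (ih : ∀ x' L' n', x' + L'.sum - L'.headD 0 < x + rest.sum → IsAdmissibleWord n' L' →
      pi (n' + 1) (x' :: L') ∈ piSpan (n' + 1) (x' + L'.sum)) :
    pi (n + 2) (x :: l :: rest) ∈ piSpan (n + 2) (x + (l :: rest).sum) := by
  obtain ⟨c, hc⟩ := mkR_Q_mul_Q_eq_of_lt_two_mul hlx hx
  have hl := hrest.one_le_head
  have hrest' := hrest.of_cons
  have hhead : 2 * rest.headD 0 ≤ l := (stAdmissible_cons.mp hrest.stAdmissible).1
  have hsplit : pi (n + 2) (x :: l :: rest) = mkR (Q (2 * l)) * pi (n + 1) ((x - l) :: rest) +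
      ∑ t ∈ Finset.Ioc l (x + l), c t • pi (n + 2) ((x + l - t) :: t :: rest) := by
    rw [pi_cons_cons, hc, add_mul, Finset.sum_mul, map_mul, mul_assoc, mkR_Q_mul_pi]
    congr 1
    refine Finset.sum_congr rfl fun t _ => ?_
    rw [smul_mul_assoc, pi_cons_cons]
  have hdeg : x + (l :: rest).sum = x + l + rest.sum := by simp only [List.sum_cons]; omega
  rw [hsplit, hdeg]
  refine add_mem ?_ (Submodule.sum_mem _ fun t ht => Submodule.smul_mem _ _ ?_)
  · have hlead := ih (x - l) rest n (by omega) hrest'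
    have hmul := mkR_Q_mul_mem_piSpan (x := 2 * l) (fun L' hL' hsum => ?_) hlead
    · rwa [show 2 * l + (x - l + rest.sum) = x + l + rest.sum by omega] at hmul
    rw [← hsum]
    by_cases hL'head : L'.headD 0 ≤ l
    · exact pi_cons_mem_piSpan_of_isAdmissibleWord (hL'.cons (by omega) (by omega))
    · exact ih (2 * l) L' (n + 1) (by omega) hL'
  · rw [Finset.mem_Ioc] at ht
    have hcorr := ih (x + l - t) (t :: rest) (n + 1) ?_ (hrest'.cons (by omega) (by omega))
    · rwa [List.sum_cons, show x + l - t + (t + rest.sum) = x + l + rest.sum by omega] at hcorr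
    simp only [List.sum_cons, List.headD_cons]
    omega

theorem pi_cons_mem_piSpan (x : ℕ) {n : ℕ} {L : List ℕ} (hL : IsAdmissibleWord n L) :
    pi (n + 1) (x :: L) ∈ piSpan (n + 1) (x + L.sum) := by
  induction hm : x + L.sum - L.headD 0 using Nat.strong_induction_on generalizing x n L with
  | _ m ih =>
  rcases L with _ | ⟨l, rest⟩
  · rcases Nat.eq_zero_or_pos x with rfl | hx
    · rw [pi_succ_singleton_zero]
      simpa only [List.sum_nil, zero_add] using pi_mem_piSpan (IsAdmissibleWord.nil (n := n + 1))
    · exact pi_cons_mem_piSpan_of_isAdmissibleWord (hL.cons hx (by simp))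
  have hl := hL.one_le_head
  by_cases hadm : 2 * l ≤ x
  · exact pi_cons_mem_piSpan_of_isAdmissibleWord (hL.cons (by omega) hadm)
  by_cases hexcess : x < (l :: rest).sum
  · rw [pi_cons_eq_zero_of_lt_sum hexcess]
    exact zero_mem _
  obtain ⟨n, rfl⟩ : ∃ n', n = n' + 1 := Nat.exists_eq_add_of_le' (hL.length_le.trans' (by simp))
  simp only [List.sum_cons, List.headD_cons] at hexcess hm
  exact pi_cons_cons_mem_piSpan_of_adem hL (by omega) (by omega)
    fun x' L' n' hlt hL' => ih _ (by omega) x' hL' rfl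

theorem mkR_QI_mem_piSpan (w : List ℕ) : mkR (QI w) ∈ piSpan w.length w.sum := by
  induction w with
  | nil => simpa [pi, QI] using pi_mem_piSpan (IsAdmissibleWord.nil (n := 0))
  | cons x v ih =>
    rw [QI_cons, map_mul]
    exact mkR_Q_mul_mem_piSpan (fun L hL hsum => hsum ▸ pi_cons_mem_piSpan x hL) ih

theorem pi_k_surjective_general (k : ℕ) (a : ℕ → ℕ) :
    ∃ c : Finset (List ℕ),
      (∀ L ∈ c, L.length ≤ k ∧ StAdmissible L ∧ ∀ x ∈ L, 1 ≤ x) ∧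
      mkR (∑ L ∈ c, QI L * Q 0 ^ (k - L.length)) =
        mkR (QF k fun i => ∑ t ∈ Finset.range k, a t * Ikt k t i) := by
  set w := ((List.range k).reverse).map fun i => ∑ t ∈ Finset.range k, a t * Ikt k t i
  have hQF : QF k (fun i => ∑ t ∈ Finset.range k, a t * Ikt k t i) = QI w := by
    simp [QF, QI, w, List.map_map, Function.comp_def]
  have hw : mkR (QI w) ∈ piSpan k w.sum := by simpa [w] using mkR_QI_mem_piSpan w
  obtain ⟨c, hc, hsum⟩ := exists_finset_sum_eq_of_mem_span_image hw
  refine ⟨c, fun L hL => ⟨(hc L hL).1.length_le, (hc L hL).1.stAdmissible, (hc L hL).1.one_le⟩, ?_⟩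
  rw [map_sum, hQF, ← hsum]
  rfl

/-- The map `π_k : 𝒜₂(k) → R[k]`, `π_k(Q^I) = Q^I (Q^0)^{k−ℓ(I)}`, is surjective: every
admissible nonnegative-excess `I = Σ_t a_t I_{k,t}` of length `k` with `Σ a_t > 0` is the
image of an element `K` of `𝒜₂(k)`, i.e. of an `𝔽₂`-combination of Steenrod-admissible
monomials of length `≤ k`. -/
theorem pi_k_surjective (k : ℕ) (hk : 1 ≤ k) (a : ℕ → ℕ)
    (hpos : 0 < ∑ t ∈ Finset.range k, a t) :
    ∃ c : Finset (List ℕ),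
      (∀ L ∈ c, L.length ≤ k ∧ StAdmissible L ∧ ∀ x ∈ L, 1 ≤ x) ∧
      mkR (∑ L ∈ c, QI L * Q 0 ^ (k - L.length)) =
        mkR (QF k fun i => ∑ t ∈ Finset.range k, a t * Ikt k t i) :=
  pi_k_surjective_general k a

end
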